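/- Let N and s be positive natural numbers, and work in ℝ^N with the standard inner product ⟨·,·⟩. Let D : ℝ^N → ℝ^N be a symmetric linear map (⟨D v, w⟩ = ⟨v, D w⟩ for all v, w). Let τ ∈ ℝ, a : Fin s → Fin s → ℝ, b : Fin s → ℝ. Suppose uⁿ, uⁿ⁺¹ ∈ ℝ^N and stage values uᵢ, kᵢ ∈ ℝ^N (i = 1,…,s) satisfy uᵢ = uⁿ + τ Σⱼ aᵢⱼ kⱼ and uⁿ⁺¹ = uⁿ + τ Σᵢ bᵢ kᵢ. Then ½⟨D uⁿ⁺¹, uⁿ⁺¹⟩ − ½⟨D uⁿ, uⁿ⟩ = τ Σᵢ bᵢ ⟨uᵢ, D kᵢ⟩ + (τ²/2) Σᵢ Σⱼ (bᵢbⱼ − bᵢaᵢⱼ − bⱼaⱼᵢ) ⟨kᵢ, D kⱼ⟩. -/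

import Mathlib

/-! With `K = ∑ bᵢ kᵢ`, symmetry of `B(v, w) = ⟪v, D w⟫` gives
`B(uⁿ⁺¹, uⁿ⁺¹) - B(uⁿ, uⁿ) = 2τ B(uⁿ, K) + τ² B(K, K)`. Replacing `uⁿ` by the stage values `uᵢ`
in the cross term costs `τ² ∑ᵢⱼ bᵢ aᵢⱼ B(kᵢ, kⱼ)`, whose symmetrisation produces the
`- bᵢ aᵢⱼ - bⱼ aⱼᵢ` coefficients. Only bilinearity and symmetry enter, so the identity holds for
any symmetric bilinear form over a commutative ring. -/

open scoped RealInnerProductSpace BigOperators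

namespace LinearMap.BilinForm

variable {R M ι : Type*} [CommRing R] [AddCommGroup M] [Module R M] [Fintype ι]
  {B : LinearMap.BilinForm R M}

theorem apply_sum_smul_sum_smul (b c : ι → R) (k : ι → M) :
    B (∑ i, b i • k i) (∑ j, c j • k j) = ∑ i, ∑ j, b i * c j * B (k i) (k j) := by
  simp only [sum_left, sum_right, smul_left, smul_right, Finset.mul_sum]
  rw [Finset.sum_comm]
  exact Finset.sum_congr rfl fun i _ => Finset.sum_congr rfl fun j _ => by ring

theorem IsSymm.apply_add_add_self (hB : B.IsSymm) (x y : M) :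
    B (x + y) (x + y) = B x x + 2 * B x y + B y y := by
  rw [add_left, add_right, add_right, hB.eq y x]
  ring

theorem IsSymm.sum_sum_add_transpose (hB : B.IsSymm) (c : ι → ι → R) (k : ι → M) :
    ∑ i, ∑ j, (c i j + c j i) * B (k i) (k j) = 2 * ∑ i, ∑ j, c i j * B (k i) (k j) := by
  have hswap : ∑ i, ∑ j, c j i * B (k i) (k j) = ∑ i, ∑ j, c i j * B (k i) (k j) := by
    rw [Finset.sum_comm]
    simp only [hB.eq (k _) (k _)]
  simp only [add_mul, Finset.sum_add_distrib, hswap]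
  ring

theorem IsSymm.rungeKutta_increment (hB : B.IsSymm) (τ : R) (a : ι → ι → R) (b : ι → R)
    (u : M) (k : ι → M) :
    B (u + τ • ∑ i, b i • k i) (u + τ • ∑ i, b i • k i) - B u u
      = 2 * τ * ∑ i, b i * B (u + τ • ∑ j, a i j • k j) (k i)
        + τ ^ 2 * ∑ i, ∑ j, (b i * b j - b i * a i j - b j * a j i) * B (k i) (k j) := by
  have hstage : ∑ i, b i * B (u + τ • ∑ j, a i j • k j) (k i)
      = B u (∑ i, b i • k i) + τ * ∑ i, ∑ j, b i * a i j * B (k i) (k j) := by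
    simp only [add_left, smul_left, sum_left, sum_right, smul_right, Finset.mul_sum,
      ← Finset.sum_add_distrib]
    refine Finset.sum_congr rfl fun i _ => ?_
    rw [mul_add, Finset.mul_sum]
    congr 1
    refine Finset.sum_congr rfl fun j _ => ?_
    rw [hB.eq (k j)]
    ring
  have hcoeff : ∑ i, ∑ j, (b i * b j - b i * a i j - b j * a j i) * B (k i) (k j)
      = ∑ i, ∑ j, b i * b j * B (k i) (k j)
        - ∑ i, ∑ j, (b i * a i j + b j * a j i) * B (k i) (k j) := by
    simp only [← Finset.sum_sub_distrib]
    exact Finset.sum_congr rfl fun i _ => Finset.sum_congr rfl fun j _ => by ring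
  rw [hB.apply_add_add_self, smul_left, smul_right, smul_right, apply_sum_smul_sum_smul, hstage,
    hcoeff, hB.sum_sum_add_transpose (fun i j => b i * a i j)]
  ring

end LinearMap.BilinForm

theorem LinearMap.IsSymmetric.isSymm_innerₗ_compl₂ {E : Type*} [NormedAddCommGroup E]
    [InnerProductSpace ℝ E] {D : E →ₗ[ℝ] E} (hD : D.IsSymmetric) :
    LinearMap.BilinForm.IsSymm ((innerₗ E).compl₂ D) :=
  ⟨fun v w => by simp only [compl₂_apply, innerₗ_apply_apply, ← hD v w, real_inner_comm]⟩

theorem rk_quadratic_momentum_identity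
    (N s : ℕ)
    (D : EuclideanSpace ℝ (Fin N) →ₗ[ℝ] EuclideanSpace ℝ (Fin N))
    (hD : ∀ v w : EuclideanSpace ℝ (Fin N), ⟪D v, w⟫ = ⟪v, D w⟫)
    (τ : ℝ) (a : Fin s → Fin s → ℝ) (b : Fin s → ℝ)
    (un un1 : EuclideanSpace ℝ (Fin N)) (uS kS : Fin s → EuclideanSpace ℝ (Fin N))
    (hstage : ∀ i, uS i = un + τ • ∑ j, a i j • kS j)
    (hnext : un1 = un + τ • ∑ i, b i • kS i) :
    (1/2 : ℝ) * ⟪D un1, un1⟫ - (1/2 : ℝ) * ⟪D un, un⟫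
      = τ * ∑ i, b i * ⟪uS i, D (kS i)⟫
        + (τ^2 / 2) * ∑ i, ∑ j,
            (b i * b j - b i * a i j - b j * a j i) * ⟪kS i, D (kS j)⟫ := by
  have hincrement :=
    (LinearMap.IsSymmetric.isSymm_innerₗ_compl₂ hD).rungeKutta_increment τ a b un kS
  simp only [LinearMap.compl₂_apply, innerₗ_apply_apply, ← hstage, ← hnext] at hincrement
  rw [hD, hD]
  linear_combination hincrement / 2
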